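/- arXiv:2102.08823 — 2 statements merged into one kernel-verified Lean document; each statement's English description precedes it below -/
import Mathlib

section
/- Let f ≥ 2 be a natural number and n > 0 a real number. The function φ(α) = (1/2)·(nα)^f·e^{−nα}/f! + (1/2)·(nα)^{f−1}·e^{−nα}/(f−1)! on [0,∞) attains its unique critical point in (0,∞) at α* = √(f(f−1))/n. -/
/-!
Writing `x = n α` and using `f! = f (f - 1)!`, the derivative factors as
`φ'(α) = n e^{-x} x^{f-2} (f (f - 1) - x²) / (2 f!)`; for `x > 0` every factor but the last
is positive, so the only critical point is `x = √(f (f - 1))`.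
-/

open Real
open scoped Nat

noncomputable def pivotalityGain (f : ℕ) (x : ℝ) : ℝ :=
  1 / 2 * x ^ f * exp (-x) / f ! + 1 / 2 * x ^ (f - 1) * exp (-x) / (f - 1)!

noncomputable def pivotalityGainDeriv (f : ℕ) (x : ℝ) : ℝ :=
  exp (-x) * x ^ (f - 2) / (2 * f !) * (f * (f - 1) - x ^ 2)

theorem pivotalityGainDeriv_eq_zero_iff {f : ℕ} {x : ℝ} (hx : 0 < x) :
    pivotalityGainDeriv f x = 0 ↔ x = √(f * (f - 1)) := by
  rw [pivotalityGainDeriv, mul_eq_zero, or_iff_right (by positivity), sub_eq_zero, eq_comm (a := x),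
    sqrt_eq_iff_mul_self_eq_of_pos hx, sq, eq_comm]

theorem hasDerivAt_pivotalityGain {f : ℕ} (hf : 2 ≤ f) (x : ℝ) :
    HasDerivAt (pivotalityGain f) (pivotalityGainDeriv f x) x := by
  obtain ⟨m, rfl⟩ := Nat.exists_eq_add_of_le' hf
  have hexp : HasDerivAt (fun x : ℝ ↦ exp (-x)) (-exp (-x)) x := by
    simpa using (hasDerivAt_neg x).exp
  have hsum := ((((hasDerivAt_pow (m + 2) x).mul hexp).const_mul (1 / 2)).div_const
    ((m + 2)! : ℝ)).add ((((hasDerivAt_pow (m + 1) x).mul hexp).const_mul (1 / 2)).div_const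
    ((m + 1)! : ℝ))
  have hfun : pivotalityGain (m + 2) = fun y ↦
      1 / 2 * (y ^ (m + 2) * exp (-y)) / (m + 2)! + 1 / 2 * (y ^ (m + 1) * exp (-y)) / (m + 1)! := by
    ext y
    simp only [pivotalityGain, mul_assoc, show m + 2 - 1 = m + 1 by omega]
  rw [hfun]
  refine hsum.congr_deriv ?_
  rw [pivotalityGainDeriv, show m + 2 - 1 = m + 1 by omega, show m + 2 - 2 = m by omega,
    Nat.add_sub_cancel, Nat.factorial_succ (m + 1)]
  push_cast
  field_simp
  ring

theorem stmt_5 (f : ℕ) (hf : 2 ≤ f) (n : ℝ) (hn : 0 < n) :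
    (HasDerivAt (fun α : ℝ =>
        (1 / 2) * (n * α) ^ f * Real.exp (-(n * α)) / (Nat.factorial f) +
        (1 / 2) * (n * α) ^ (f - 1) * Real.exp (-(n * α)) / (Nat.factorial (f - 1)))
      0 (Real.sqrt ((f : ℝ) * ((f : ℝ) - 1)) / n)) ∧
    (∀ α : ℝ, 0 < α →
      deriv (fun α : ℝ =>
        (1 / 2) * (n * α) ^ f * Real.exp (-(n * α)) / (Nat.factorial f) +
        (1 / 2) * (n * α) ^ (f - 1) * Real.exp (-(n * α)) / (Nat.factorial (f - 1))) α = 0 →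
      α = Real.sqrt ((f : ℝ) * ((f : ℝ) - 1)) / n) := by
  set c := √((f : ℝ) * ((f : ℝ) - 1))
  have hφ (α : ℝ) : HasDerivAt (fun α ↦ pivotalityGain f (n * α))
      (n * pivotalityGainDeriv f (n * α)) α :=
    ((hasDerivAt_pivotalityGain hf (n * α)).comp α
      ((hasDerivAt_id α).const_mul n)).congr_deriv (by simp [mul_comm])
  have hc : 0 < c := sqrt_pos.mpr (by
    have : (2 : ℝ) ≤ f := by exact_mod_cast hf
    nlinarith)
  change HasDerivAt (fun α ↦ pivotalityGain f (n * α)) 0 (c / n) ∧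
    ∀ α, 0 < α → deriv (fun α ↦ pivotalityGain f (n * α)) α = 0 → α = c / n
  refine ⟨?_, fun α hα hcrit ↦ ?_⟩
  · have hnc : n * (c / n) = c := mul_div_cancel₀ c hn.ne'
    simpa [hnc, (pivotalityGainDeriv_eq_zero_iff hc).mpr rfl] using hφ (c / n)
  · rw [(hφ α).deriv] at hcrit
    have hx : n * α = c :=
      (pivotalityGainDeriv_eq_zero_iff (by positivity)).mp
        ((mul_eq_zero.mp hcrit).resolve_left hn.ne')
    rw [← hx, mul_div_cancel_left₀ α hn.ne']
end

section
/- Let f ≥ 2 be a natural number and n > 0 real, and let φ(α) = (1/2)(nα)^f e^{−nα}/f! + (1/2)(nα)^{f−1} e^{−nα}/(f−1)! for α ∈ [0,1]. Assume √(f(f−1))/n ≤ 1 and let α* = √(f(f−1))/n. Then φ(α*) = (1/2)·e^{−√(f(f−1))}·( (f(f−1))^{f/2}/f! + (f(f−1))^{(f−1)/2}/(f−1)! ) and φ(α) ≤ φ(α*) for all α ∈ [0,1]. -/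
noncomputable def Hfun (m : ℕ) (t : ℝ) : ℝ :=
  (t ^ (m + 2) + ((m : ℝ) + 2) * t ^ (m + 1)) * Real.exp (-t)

lemma Hderiv (m : ℕ) (t : ℝ) :
    HasDerivAt (Hfun m)
      (Real.exp (-t) * (t ^ m * ((((m : ℝ) + 2) * ((m : ℝ) + 1)) - t ^ 2))) t := by
  have h1 : HasDerivAt (fun t : ℝ => t ^ (m + 2) + ((m : ℝ) + 2) * t ^ (m + 1))
      (((m : ℝ) + 2) * t ^ (m + 1) + ((m : ℝ) + 2) * (((m : ℝ) + 1) * t ^ m)) t := by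
    have ha := hasDerivAt_pow (m + 2) t
    have hb := (hasDerivAt_pow (m + 1) t).const_mul ((m : ℝ) + 2)
    exact (ha.add hb).congr_deriv (by
      rw [show m + 2 - 1 = m + 1 by omega, show m + 1 - 1 = m by omega]; push_cast; ring)
  have h2 : HasDerivAt (fun t : ℝ => Real.exp (-t)) (-Real.exp (-t)) t := by
    exact ((Real.hasDerivAt_exp (-t)).comp t (hasDerivAt_neg t)).congr_deriv (by ring)
  have := h1.mul h2
  exact this.congr_deriv (by ring)

lemma Hmax (m : ℕ) : ∀ t : ℝ, 0 ≤ t →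
    Hfun m t ≤ Hfun m (Real.sqrt (((m : ℝ) + 2) * ((m : ℝ) + 1))) := by
  set c : ℝ := ((m : ℝ) + 2) * ((m : ℝ) + 1) with hc
  have hcpos : 0 < c := by positivity
  set s : ℝ := Real.sqrt c with hs
  have hspos : 0 < s := Real.sqrt_pos.mpr hcpos
  have hs2 : s ^ 2 = c := Real.sq_sqrt hcpos.le
  have hcont : Continuous (Hfun m) := by
    have := fun t => (Hderiv m t).differentiableAt
    exact Differentiable.continuous this
  have hmono : MonotoneOn (Hfun m) (Set.Icc 0 s) := by
    apply monotoneOn_of_deriv_nonneg (convex_Icc 0 s) hcont.continuousOn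
    · intro t ht
      exact (Hderiv m t).differentiableAt.differentiableWithinAt
    · intro t ht
      rw [interior_Icc] at ht
      rw [(Hderiv m t).deriv]
      have h1 : 0 < t := ht.1
      have h2 : t ^ 2 ≤ c := by
        rw [← hs2]
        exact pow_le_pow_left₀ h1.le ht.2.le 2
      have h3 : 0 ≤ ((m : ℝ) + 2) * ((m : ℝ) + 1) - t ^ 2 := by rw [← hc]; linarith
      have ht0 : (0:ℝ) ≤ t ^ m := by positivity
      exact mul_nonneg (Real.exp_pos _).le (mul_nonneg ht0 h3)
  have hanti : AntitoneOn (Hfun m) (Set.Ici s) := by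
    apply antitoneOn_of_deriv_nonpos (convex_Ici s) hcont.continuousOn
    · intro t ht
      exact (Hderiv m t).differentiableAt.differentiableWithinAt
    · intro t ht
      rw [interior_Ici] at ht
      rw [(Hderiv m t).deriv]
      have h1 : 0 < t := hspos.trans ht
      have h2 : c ≤ t ^ 2 := by
        rw [← hs2]
        exact pow_le_pow_left₀ hspos.le (le_of_lt ht) 2
      have h3 : ((m : ℝ) + 2) * ((m : ℝ) + 1) - t ^ 2 ≤ 0 := by rw [← hc]; linarith
      have ht0 : (0:ℝ) ≤ t ^ m := by positivity
      have he : (0:ℝ) ≤ Real.exp (-t) := (Real.exp_pos _).le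
      have h4 : t ^ m * (((m : ℝ) + 2) * ((m : ℝ) + 1) - t ^ 2) ≤ 0 :=
        mul_nonpos_iff.mpr (Or.inl ⟨ht0, h3⟩)
      exact mul_nonpos_iff.mpr (Or.inl ⟨he, h4⟩)
  intro t ht
  rcases le_or_gt t s with h | h
  · exact hmono ⟨ht, h⟩ ⟨le_refl 0 |>.trans hspos.le, le_refl s⟩ h
  · exact hanti (Set.self_mem_Ici) h.le h.le

theorem stmt_6 (f : ℕ) (hf : 2 ≤ f) (n : ℝ) (hn : 0 < n)
    (φ : ℝ → ℝ)
    (hφ : ∀ α : ℝ, φ α =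
      (1 / 2) * (n * α) ^ f * Real.exp (-(n * α)) / (Nat.factorial f) +
      (1 / 2) * (n * α) ^ (f - 1) * Real.exp (-(n * α)) / (Nat.factorial (f - 1)))
    (hα : Real.sqrt ((f : ℝ) * ((f : ℝ) - 1)) / n ≤ 1) :
    φ (Real.sqrt ((f : ℝ) * ((f : ℝ) - 1)) / n) =
      (1 / 2) * Real.exp (-Real.sqrt ((f : ℝ) * ((f : ℝ) - 1))) *
        (((f : ℝ) * ((f : ℝ) - 1)) ^ ((f : ℝ) / 2) / (Nat.factorial f) +
         ((f : ℝ) * ((f : ℝ) - 1)) ^ (((f : ℝ) - 1) / 2) / (Nat.factorial (f - 1))) ∧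
    ∀ α ∈ Set.Icc (0 : ℝ) 1, φ α ≤ φ (Real.sqrt ((f : ℝ) * ((f : ℝ) - 1)) / n) := by
  obtain ⟨m, rfl⟩ : ∃ m, f = m + 2 := ⟨f - 2, by omega⟩
  have hfc : ((m + 2 : ℕ) : ℝ) = (m : ℝ) + 2 := by push_cast; ring
  have hfm : (m + 2) - 1 = m + 1 := by omega
  set c : ℝ := ((m : ℝ) + 2) * ((m : ℝ) + 1) with hcdef
  have hcc : ((m + 2 : ℕ) : ℝ) * (((m + 2 : ℕ) : ℝ) - 1) = c := by push_cast; ring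
  have hcpos : 0 < c := by positivity
  rw [hcc]
  set s : ℝ := Real.sqrt c with hsdef
  have hspos : 0 < s := Real.sqrt_pos.mpr hcpos
  -- rewrite φ in terms of Hfun
  have hfact : (Nat.factorial (m + 2) : ℝ) = ((m : ℝ) + 2) * (Nat.factorial (m + 1)) := by
    rw [Nat.factorial_succ]
    push_cast
    ring
  have hfactpos : (0 : ℝ) < (Nat.factorial (m + 1) : ℝ) := by
    exact_mod_cast (Nat.factorial_pos (m + 1))
  have hφH : ∀ α : ℝ, φ α = Hfun m (n * α) / (2 * (Nat.factorial (m + 2))) := by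
    intro α
    rw [hφ α, hfm, Hfun, hfact]
    field_simp
  have hns : n * (s / n) = s := by field_simp
  have hpow : ∀ k : ℕ, s ^ k = c ^ ((k : ℝ) / 2) := by
    intro k
    rw [hsdef, Real.sqrt_eq_rpow, ← Real.rpow_natCast (c ^ ((1 : ℝ) / 2)) k,
      ← Real.rpow_mul hcpos.le]
    congr 1
    ring
  constructor
  · rw [hφH, hns, Hfun, hfact]
    have h1 : c ^ ((((m + 2 : ℕ) : ℝ)) / 2) = s ^ (m + 2) := (hpow (m + 2)).symm
    have h2 : c ^ (((((m + 2 : ℕ) : ℝ)) - 1) / 2) = s ^ (m + 1) := by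
      rw [show ((((m + 2 : ℕ) : ℝ)) - 1) / 2 = ((m + 1 : ℕ) : ℝ) / 2 by push_cast; ring]
      exact (hpow (m + 1)).symm
    rw [hfm, h1, h2]
    field_simp
  · intro α hα'
    rw [hφH, hφH, hns]
    have hmax := Hmax m (n * α) (mul_nonneg hn.le hα'.1)
    rw [← hcdef, ← hsdef] at hmax
    have hden : (0 : ℝ) < 2 * (Nat.factorial (m + 2)) := by positivity
    exact div_le_div_of_nonneg_right hmax hden.le
end
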